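/- Let G be a vertex-transitive graph with adjacency matrix A and H(t) = exp(−itA). If for some fixed vertex u there exist a sequence t_k and γ with |γ| = 1 such that H(t_k)e_u → γe_u, then H(t_k) → γI (G is almost periodic). -/

import Mathlib

open Matrix Complex Filter Topology

attribute [local instance] Matrix.linftyOpNormedRing Matrix.linftyOpNormedAlgebra

/-- Transition matrix `H(t) = exp(-itA)`. -/
noncomputable def transM {V : Type*} [Fintype V] [DecidableEq V]
    (A : Matrix V V ℂ) (t : ℝ) : Matrix V V ℂ :=
  NormedSpace.exp ((-(t : ℂ) * Complex.I) • A)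

/-- The standard basis vector `e_u`. -/
def eVec {V : Type*} [Fintype V] [DecidableEq V] (u : V) : V → ℂ := Pi.single u 1

/-!
Reindexing by a graph automorphism `φ` is a continuous algebra automorphism fixing `A`, so it
fixes `H(t) = exp(-itA)`: `H(t) (φ i) (φ j) = H(t) i j`. By vertex-transitivity each column of `H(t)` is therefore a
permutation of the column at `u`, and the convergence of that column to `γ e_u` transports to
every column, i.e. to entrywise convergence of `H(t_k)` to `γ I`.
-/

theorem transM_reindex {V W : Type*} [Fintype V] [DecidableEq V] [Fintype W] [DecidableEq W]
    (e : V ≃ W) (A : Matrix V V ℂ) (t : ℝ) :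
    (transM A t).reindex e e = transM (A.reindex e e) t := by
  rw [transM, transM, ← coe_reindexAlgEquiv ℂ ℂ e, ← map_smul]
  exact NormedSpace.map_exp (reindexAlgEquiv ℂ ℂ e) (continuous_id.matrix_reindex e e) _

theorem transM_adjMatrix_apply_iso {V : Type*} [Fintype V] [DecidableEq V]
    {G : SimpleGraph V} [DecidableRel G.Adj] (φ : G ≃g G) (t : ℝ) (i j : V) :
    transM (G.adjMatrix ℂ) t (φ i) (φ j) = transM (G.adjMatrix ℂ) t i j := by
  conv_lhs => rw [← φ.reindex_adjMatrix (α := ℂ), ← transM_reindex]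
  simp

theorem transM_mulVec_eVec_apply {V : Type*} [Fintype V] [DecidableEq V]
    (A : Matrix V V ℂ) (t : ℝ) (u i : V) : (transM A t *ᵥ eVec u) i = transM A t i u := by
  simp [eVec]

theorem vertex_transitive_almost_periodic_general {V : Type*} [Fintype V] [DecidableEq V]
    (G : SimpleGraph V) [DecidableRel G.Adj]
    (htrans : ∀ a b : V, ∃ φ : G ≃g G, φ a = b)
    (u : V) (t : ℕ → ℝ) (γ : ℂ)
    (hu : Tendsto (fun k => transM (G.adjMatrix ℂ) (t k) *ᵥ eVec u) atTop
      (nhds (γ • eVec u))) :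
    Tendsto (fun k => transM (G.adjMatrix ℂ) (t k)) atTop
      (nhds (γ • (1 : Matrix V V ℂ))) := by
  refine tendsto_pi_nhds.2 fun i => tendsto_pi_nhds.2 fun j => ?_
  obtain ⟨φ, rfl⟩ := htrans u j
  have hentry : ∀ k, transM (G.adjMatrix ℂ) (t k) i (φ u)
      = (transM (G.adjMatrix ℂ) (t k) *ᵥ eVec u) (φ.symm i) := fun k => by
    rw [transM_mulVec_eVec_apply, ← transM_adjMatrix_apply_iso φ _ (φ.symm i), φ.apply_symm_apply]
  have hlimit : (γ • (1 : Matrix V V ℂ)) i (φ u) = (γ • eVec u) (φ.symm i) := by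
    simp [eVec, Pi.single_apply, one_apply, φ.symm_apply_eq]
  simpa only [hentry, hlimit] using tendsto_pi_nhds.1 hu (φ.symm i)

/-- For a vertex-transitive graph, if `H(t_k)e_u → γ e_u` at one vertex `u`,
then `H(t_k) → γ I` (almost periodicity). -/
theorem vertex_transitive_almost_periodic {V : Type*} [Fintype V] [DecidableEq V]
    (G : SimpleGraph V) [DecidableRel G.Adj]
    (htrans : ∀ a b : V, ∃ φ : G ≃g G, φ a = b)
    (u : V) (t : ℕ → ℝ) (γ : ℂ) (hγ : ‖γ‖ = 1)
    (hu : Tendsto (fun k => transM (G.adjMatrix ℂ) (t k) *ᵥ eVec u) atTop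
      (nhds (γ • eVec u))) :
    Tendsto (fun k => transM (G.adjMatrix ℂ) (t k)) atTop
      (nhds (γ • (1 : Matrix V V ℂ))) :=
  vertex_transitive_almost_periodic_general G htrans u t γ hu
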